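/- (Remark 3.2(1): pseudo-hyperbolic Lipschitz characterization of ‖f‖_{2,gen} ≤ 1 on the disk.) Let f : 𝔻 → ℂ be a function on the open unit disk. Then the following are equivalent: (i) for every 2×2 complex matrix T with ‖T‖ ≤ 1 that is diagonalizable with two distinct eigenvalues z, w ∈ 𝔻 and corresponding eigenvectors v_1, v_2 forming a basis of ℂ^2, the matrix f(T) determined by f(T)v_1 = f(z)v_1 and f(T)v_2 = f(w)v_2 satisfies ‖f(T)‖ ≤ 1; (ii) |f(z)| ≤ 1 for all z ∈ 𝔻 and |f(z) − f(w)| ≤ d_𝔻(z,w) · |1 − conj(f(w))·f(z)| for all z, w ∈ 𝔻 (i.e., sup_{z≠w} d_𝔻(f(z),f(w))/d_𝔻(z,w) ≤ 1). -/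

import Mathlib

open scoped Matrix.Norms.L2Operator ComplexOrder
open Matrix

noncomputable section

open scoped Classical in
/-- Square root of a positive semidefinite matrix (junk value `0` otherwise). -/
def msqrt {n' : Type*} [Fintype n'] [DecidableEq n'] (M : Matrix n' n' ℂ) : Matrix n' n' ℂ :=
  if h : M.PosSemidef then (h.1.eigenvectorUnitary : Matrix n' n' ℂ) *
      diagonal (fun i => ((Real.sqrt (h.1.eigenvalues i) : ℝ) : ℂ)) *
      (star h.1.eigenvectorUnitary : Matrix n' n' ℂ) else 0

/-- The pseudo-distance `d_Δ`. -/
def dDelta {α m' n' : Type*} [Fintype m'] [Fintype n'] [DecidableEq m'] [DecidableEq n']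
    (Δ : α → Matrix m' n' ℂ) (z w : α) : ℝ :=
  ‖(msqrt (1 - Δ w * (Δ w)ᴴ))⁻¹ * ((Δ z - Δ w) *
      ((1 - (Δ w)ᴴ * Δ z)⁻¹ * msqrt (1 - (Δ w)ᴴ * Δ w)))‖

/-- `B_Δ = {z ∈ E : ‖Δ(z)‖ < 1}`. -/
def BDelta {α m' n' : Type*} [Fintype m'] [Fintype n'] [DecidableEq n'] (E : Set α)
    (Δ : α → Matrix m' n' ℂ) : Set α :=
  {z | z ∈ E ∧ ‖Δ z‖ < 1}

/-- pseudo-hyperbolic distance on the unit disk -/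
def dDisk (a b : ℂ) : ℝ := ‖a - b‖ / ‖1 - (starRingEnd ℂ) b * a‖

/-- elementary tensor `ξ ⊗ v` in `ℂ^m ⊗ ℂ^2`, realized as a function on `m × Fin 2` -/
def tpr {m' : Type*} (ξ : m' → ℂ) (v : Fin 2 → ℂ) : m' × Fin 2 → ℂ :=
  fun p => ξ p.1 * v p.2

/-- inner product, conjugate-linear in the second variable -/
def herm {m' : Type*} [Fintype m'] (ξ η : m' → ℂ) : ℂ :=
  ∑ p, ξ p * (starRingEnd ℂ) (η p)

/-- positive semidefiniteness of a `2 × 2` kernel `(a i j)` -/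
def PSD2 (a : Fin 2 → Fin 2 → ℂ) : Prop :=
  ∀ c : Fin 2 → ℂ, 0 ≤ ∑ i, ∑ j, a i j * c i * (starRingEnd ℂ) (c j)

/-- `T` is a generic tuple with joint eigenvectors `v` and joint eigenvalues `z 0 ≠ z 1`. -/
def IsGenericTuple {d : ℕ} (T : Fin d → Matrix (Fin 2) (Fin 2) ℂ)
    (v : Fin 2 → Fin 2 → ℂ) (z : Fin 2 → Fin d → ℂ) : Prop :=
  LinearIndependent ℂ v ∧ z 0 ≠ z 1 ∧ ∀ i j, T i *ᵥ v j = z j i • v j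

/-- `‖Δ(T)‖ ≤ 1`, where `Δ(T)` is the matrix on `ℂ^s ⊗ ℂ^2` determined by
`Δ(T)(e_i ⊗ v_j) = (Δ(z_j) e_i) ⊗ v_j`. -/
def DeltaTContract {β : Type*} {s r : ℕ} (Δ : β → Matrix (Fin s) (Fin r) ℂ)
    (v : Fin 2 → Fin 2 → ℂ) (z : Fin 2 → β) : Prop :=
  ∀ DT : Matrix (Fin s × Fin 2) (Fin r × Fin 2) ℂ,
    (∀ (i : Fin r) (j : Fin 2),
      DT *ᵥ tpr (Pi.single i 1) (v j) = tpr (Δ (z j) *ᵥ Pi.single i 1) (v j)) →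
    ‖DT‖ ≤ 1

/-- membership in the class `S_{2,gen}(B_Δ)` -/
def MemS2gen {d s r : ℕ} (E : Set (Fin d → ℂ)) (Δ : (Fin d → ℂ) → Matrix (Fin s) (Fin r) ℂ)
    (f : (Fin d → ℂ) → ℂ) : Prop :=
  ∀ (T : Fin d → Matrix (Fin 2) (Fin 2) ℂ) (v : Fin 2 → Fin 2 → ℂ) (z : Fin 2 → Fin d → ℂ),
    IsGenericTuple T v z → (∀ j, z j ∈ BDelta E Δ) → DeltaTContract Δ v z →
    ∀ fT : Matrix (Fin 2) (Fin 2) ℂ, (∀ j, fT *ᵥ v j = f (z j) • v j) → ‖fT‖ ≤ 1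

/-- the Möbius pseudo-distance of a domain `Ω` -/
def dMobius {α : Type*} [NormedAddCommGroup α] [NormedSpace ℂ α] (Ω : Set α) (z w : α) : ℝ :=
  sSup {x | ∃ g : α → ℂ, DifferentiableOn ℂ g Ω ∧ (∀ ζ ∈ Ω, ‖g ζ‖ < 1) ∧ x = dDisk (g z) (g w)}

/-- `Ω` is a complete spectral domain for the diagonalizable tuple with eigenvectors `v` and
joint eigenvalues `z 0, z 1`. -/
def IsCompleteSpectralDomainFor {α : Type*} [NormedAddCommGroup α] [NormedSpace ℂ α]
    (Ω : Set α) (v : Fin 2 → Fin 2 → ℂ) (z : Fin 2 → α) : Prop :=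
  ∀ (n : ℕ) (F : α → Matrix (Fin n) (Fin n) ℂ),
    (∀ i j, DifferentiableOn ℂ (fun ζ => F ζ i j) Ω) →
    ∀ C : ℝ, (∀ ζ ∈ Ω, ‖F ζ‖ ≤ C) →
    ∀ FT : Matrix (Fin n × Fin 2) (Fin n × Fin 2) ℂ,
      (∀ (ξ : Fin n → ℂ) (j : Fin 2), FT *ᵥ tpr ξ (v j) = tpr (F (z j) *ᵥ ξ) (v j)) →
      ‖FT‖ ≤ C

/-!
For a `2 × 2` matrix `A` with eigenvalues `μ, ν` on linearly independent eigenvectors `v₀, v₁`,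
`‖x‖² - ‖A x‖²` at `x = a v₀ + b v₁` is the Hermitian form in `(a, b)` with the Pick-type
coefficients `(1 - λᵢ conj λⱼ) ⟨vᵢ, vⱼ⟩`. By the identity
`|1 - conj ν μ|² - |μ - ν|² = (1 - |μ|²)(1 - |ν|²)`, `A` is therefore a contraction iff
`|μ|, |ν| ≤ 1` and `d_𝔻(μ, ν)² ≤ sin² θ`, where `θ` is the angle between `v₀` and `v₁`.
So if `f` maps the disk to the closed disk and does not increase `d_𝔻`, the condition on `T`
passes to `f(T)`; conversely, eigenvectors with `sin² θ = d_𝔻(z, w)²` give a contraction `T`,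
and then `‖f(T)‖ ≤ 1` says exactly `d_𝔻(f z, f w) ≤ d_𝔻(z, w)`.
-/

open Complex ComplexConjugate

lemma EuclideanSpace.norm_toLp_sq {ι : Type*} [Fintype ι] (y : ι → ℂ) :
    ‖WithLp.toLp 2 y‖ ^ 2 = ∑ i, normSq (y i) := by
  simp [EuclideanSpace.norm_sq_eq, normSq_eq_norm_sq]

lemma Matrix.l2_opNorm_le_one_iff {m n : Type*} [Fintype m] [Fintype n] [DecidableEq n]
    (A : Matrix m n ℂ) :
    ‖A‖ ≤ 1 ↔ ∀ x : n → ℂ, ∑ i, normSq ((A *ᵥ x) i) ≤ ∑ i, normSq (x i) := by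
  rw [l2_opNorm_def, ContinuousLinearMap.opNorm_le_iff zero_le_one]
  refine ⟨fun h x => ?_, fun h x => ?_⟩
  · rw [← EuclideanSpace.norm_toLp_sq, ← EuclideanSpace.norm_toLp_sq]
    have := h (WithLp.toLp 2 x)
    gcongr
    simpa using this
  · rw [one_mul, ← sq_le_sq₀ (norm_nonneg _) (norm_nonneg _)]
    have := h x.ofLp
    rw [← EuclideanSpace.norm_toLp_sq, ← EuclideanSpace.norm_toLp_sq] at this
    exact this

lemma LinearIndependent.exists_mulVec_eq_smul {K n : Type*} [Field K] [Fintype n] [DecidableEq n]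
    {v : n → n → K} (hv : LinearIndependent K v) (μ : n → K) :
    ∃ A : Matrix n n K, ∀ j, A *ᵥ v j = μ j • v j := by
  let B := basisOfLinearIndependentOfCardEqFinrank' v hv (Module.finrank_fintype_fun_eq_card K).symm
  refine ⟨LinearMap.toMatrix' (B.constr K fun j => μ j • v j), fun j => ?_⟩
  rw [LinearMap.toMatrix'_mulVec]
  simpa [B] using B.constr_basis K (fun j => μ j • v j) j

lemma LinearIndependent.exists_eq_smul_add_smul {K : Type*} [Field K]
    {v : Fin 2 → Fin 2 → K} (hv : LinearIndependent K v) (x : Fin 2 → K) :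
    ∃ a b : K, x = a • v 0 + b • v 1 := by
  let B := basisOfLinearIndependentOfCardEqFinrank' v hv (Module.finrank_fintype_fun_eq_card K).symm
  refine ⟨B.repr x 0, B.repr x 1, ?_⟩
  simpa [B, Fin.sum_univ_two] using (B.sum_repr x).symm

lemma sum_normSq_mul_add_mul {m : Type*} [Fintype m] (a b : ℂ) (ξ η : m → ℂ) :
    ∑ i, normSq (a * ξ i + b * η i) = normSq a * (herm ξ ξ).re + normSq b * (herm η η).re +
      2 * (a * conj b * herm ξ η).re := by
  simp only [normSq_add, Finset.sum_add_distrib, herm, re_sum, Finset.mul_sum, mul_conj,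
    ofReal_re, map_mul]
  congr 1
  exact Finset.sum_congr rfl fun i _ => by ring_nf

lemma re_herm_self_pos {m : Type*} [Fintype m] {ξ : m → ℂ} (hξ : ξ ≠ 0) :
    0 < (herm ξ ξ).re := by
  obtain ⟨i, hi⟩ := Function.ne_iff.1 hξ
  simp only [herm, mul_conj, re_sum, ofReal_re]
  exact Finset.sum_pos' (fun j _ => normSq_nonneg _) ⟨i, Finset.mem_univ i, normSq_pos.2 hi⟩

lemma hermitianForm_nonneg_iff (α β : ℝ) (γ : ℂ) :
    (∀ a b : ℂ, 0 ≤ α * normSq a + β * normSq b + 2 * (a * conj b * γ).re) ↔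
      0 ≤ α ∧ 0 ≤ β ∧ normSq γ ≤ α * β := by
  constructor
  · intro h
    have hα : 0 ≤ α := by simpa using h 1 0
    have hβ : 0 ≤ β := by simpa using h 0 1
    refine ⟨hα, hβ, ?_⟩
    have hquad (t : ℝ) : 0 ≤ (α * normSq γ) * (t * t) + (2 * normSq γ) * t + β := by
      have := h (t * conj γ) 1
      simp only [map_one, mul_one, map_mul, normSq_ofReal, normSq_conj, mul_assoc,
        ← normSq_eq_conj_mul_self, re_ofReal_mul, ofReal_re] at this
      linarith
    have hdisc := discrim_le_zero hquad
    rw [discrim] at hdisc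
    rcases (normSq_nonneg γ).eq_or_lt with h0 | h0
    · rw [← h0]; positivity
    · nlinarith
  · rintro ⟨hα, hβ, hγ⟩ a b
    have hre : -(‖a‖ * ‖b‖ * ‖γ‖) ≤ (a * conj b * γ).re := by
      simpa using neg_le_of_abs_le (abs_re_le_norm (a * conj b * γ))
    have hamgm :
        (‖a‖ * ‖b‖ * ‖γ‖) ^ 2 ≤ ((α * normSq a + β * normSq b) / 2) ^ 2 := by
      simp only [mul_pow, ← normSq_eq_norm_sq]
      nlinarith [sq_nonneg (α * normSq a - β * normSq b), normSq_nonneg a, normSq_nonneg b,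
        mul_le_mul_of_nonneg_left hγ (mul_nonneg (normSq_nonneg a) (normSq_nonneg b))]
    have hsum : 0 ≤ α * normSq a + β * normSq b :=
      add_nonneg (mul_nonneg hα (normSq_nonneg a)) (mul_nonneg hβ (normSq_nonneg b))
    have := (pow_le_pow_iff_left₀ (by positivity) (div_nonneg hsum zero_le_two)
      two_ne_zero).1 hamgm
    linarith

lemma norm_le_one_iff_pick_of_mulVec_eq_smul {A : Matrix (Fin 2) (Fin 2) ℂ}
    {v : Fin 2 → Fin 2 → ℂ} {μ ν : ℂ} (hv : LinearIndependent ℂ v)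
    (h0 : A *ᵥ v 0 = μ • v 0) (h1 : A *ᵥ v 1 = ν • v 1) :
    ‖A‖ ≤ 1 ↔
      0 ≤ (1 - normSq μ) * (herm (v 0) (v 0)).re ∧
        0 ≤ (1 - normSq ν) * (herm (v 1) (v 1)).re ∧
        normSq ((1 - μ * conj ν) * herm (v 0) (v 1)) ≤
          (1 - normSq μ) * (herm (v 0) (v 0)).re * ((1 - normSq ν) * (herm (v 1) (v 1)).re) := by
  have hA (a b : ℂ) : A *ᵥ (a • v 0 + b • v 1) = (a * μ) • v 0 + (b * ν) • v 1 := by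
    rw [Matrix.mulVec_add, Matrix.mulVec_smul, Matrix.mulVec_smul, h0, h1, smul_smul, smul_smul]
  have hdefect (a b : ℂ) :
      ∑ i, normSq ((a • v 0 + b • v 1) i) -
          ∑ i, normSq (((a * μ) • v 0 + (b * ν) • v 1) i) =
        (1 - normSq μ) * (herm (v 0) (v 0)).re * normSq a +
          (1 - normSq ν) * (herm (v 1) (v 1)).re * normSq b +
          2 * (a * conj b * ((1 - μ * conj ν) * herm (v 0) (v 1))).re := by
    simp only [Pi.add_apply, Pi.smul_apply, smul_eq_mul, sum_normSq_mul_add_mul, map_mul,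
      sub_mul, mul_sub, one_mul, sub_re]
    ring_nf
  rw [Matrix.l2_opNorm_le_one_iff, ← hermitianForm_nonneg_iff]
  constructor
  · intro h a b
    have := h (a • v 0 + b • v 1)
    rw [hA] at this
    linarith [hdefect a b]
  · intro h x
    obtain ⟨a, b, rfl⟩ := hv.exists_eq_smul_add_smul x
    rw [hA]
    linarith [h a b, hdefect a b]

lemma normSq_one_sub_conj_mul_sub_normSq_sub (a b : ℂ) :
    normSq (1 - conj b * a) - normSq (a - b) = (1 - normSq a) * (1 - normSq b) := by
  simp only [normSq_apply, sub_re, sub_im, mul_re, mul_im, one_re, one_im, conj_re, conj_im]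
  ring

lemma normSq_sub_lt_normSq_one_sub_conj_mul {a b : ℂ} (ha : ‖a‖ < 1) (hb : ‖b‖ < 1) :
    normSq (a - b) < normSq (1 - conj b * a) := by
  have hlt {x : ℂ} (hx : ‖x‖ < 1) : 0 < 1 - normSq x := by
    rw [normSq_eq_norm_sq]
    nlinarith [norm_nonneg x]
  linarith [normSq_one_sub_conj_mul_sub_normSq_sub a b, mul_pos (hlt ha) (hlt hb)]

lemma dDisk_nonneg (a b : ℂ) : 0 ≤ dDisk a b :=
  div_nonneg (norm_nonneg _) (norm_nonneg _)

lemma dDisk_sq (a b : ℂ) : dDisk a b ^ 2 = normSq (a - b) / normSq (1 - conj b * a) := by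
  rw [dDisk, div_pow, normSq_eq_norm_sq, normSq_eq_norm_sq]

def sinSqAngle {m : Type*} [Fintype m] (ξ η : m → ℂ) : ℝ :=
  1 - normSq (herm ξ η) / ((herm ξ ξ).re * (herm η η).re)

theorem norm_le_one_iff_of_mulVec_eq_smul {A : Matrix (Fin 2) (Fin 2) ℂ}
    {v : Fin 2 → Fin 2 → ℂ} {μ ν : ℂ} (hv : LinearIndependent ℂ v)
    (h0 : A *ᵥ v 0 = μ • v 0) (h1 : A *ᵥ v 1 = ν • v 1) :
    ‖A‖ ≤ 1 ↔ ‖μ‖ ≤ 1 ∧ ‖ν‖ ≤ 1 ∧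
      normSq (μ - ν) ≤ sinSqAngle (v 0) (v 1) * normSq (1 - conj ν * μ) := by
  have hg0 := re_herm_self_pos (hv.ne_zero 0)
  have hg1 := re_herm_self_pos (hv.ne_zero 1)
  have hnorm (x : ℂ) : ‖x‖ ≤ 1 ↔ 0 ≤ 1 - normSq x := by
    rw [sub_nonneg, normSq_eq_norm_sq, sq_le_one_iff₀ (norm_nonneg x)]
  rw [norm_le_one_iff_pick_of_mulVec_eq_smul hv h0 h1, hnorm, hnorm,
    mul_nonneg_iff_of_pos_right hg0, mul_nonneg_iff_of_pos_right hg1]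
  refine and_congr_right fun _ => and_congr_right fun _ => ?_
  have hG := mul_pos hg0 hg1
  rw [sinSqAngle, normSq_mul, mul_comm μ, mul_mul_mul_comm,
    ← normSq_one_sub_conj_mul_sub_normSq_sub, one_sub_mul, div_mul_eq_mul_div, le_sub_comm,
    div_le_iff₀ hG]
  constructor <;> intro h <;> linarith

lemma exists_linearIndependent_sinSqAngle_eq {s : ℝ} (hs0 : 0 < s) (hs1 : s ≤ 1) :
    ∃ v : Fin 2 → Fin 2 → ℂ, LinearIndependent ℂ v ∧ sinSqAngle (v 0) (v 1) = s := by
  have hsqrt : (√s : ℂ) ≠ 0 := ofReal_ne_zero.2 (Real.sqrt_ne_zero'.2 hs0)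
  refine ⟨![![1, 0], ![(√(1 - s) : ℂ), (√s : ℂ)]], ?_, ?_⟩
  · rw [LinearIndependent.pair_iff]
    intro a b hab
    have hb : b = 0 := by simpa [hsqrt] using congrFun hab 1
    subst hb
    simpa using congrFun hab 0
  · simp [sinSqAngle, herm, Fin.sum_univ_two, mul_conj, normSq_ofReal,
      Real.mul_self_sqrt hs0.le, Real.mul_self_sqrt (sub_nonneg.2 hs1)]

lemma norm_le_mul_norm_iff_normSq_le {x y : ℂ} {d : ℝ} (hd : 0 ≤ d) :
    ‖x‖ ≤ d * ‖y‖ ↔ normSq x ≤ d ^ 2 * normSq y := by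
  rw [normSq_eq_norm_sq, normSq_eq_norm_sq, ← mul_pow,
    pow_le_pow_iff_left₀ (norm_nonneg _) (by positivity) two_ne_zero]

lemma norm_le_one_and_normSq_sub_le_of_forall_contraction {z w a b : ℂ} (hz : ‖z‖ < 1)
    (hw : ‖w‖ < 1) (hzw : z ≠ w)
    (h : ∀ (T : Matrix (Fin 2) (Fin 2) ℂ) (v : Fin 2 → Fin 2 → ℂ), ‖T‖ ≤ 1 →
      LinearIndependent ℂ v → T *ᵥ v 0 = z • v 0 → T *ᵥ v 1 = w • v 1 →
      ∀ fT : Matrix (Fin 2) (Fin 2) ℂ,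
        fT *ᵥ v 0 = a • v 0 → fT *ᵥ v 1 = b • v 1 → ‖fT‖ ≤ 1) :
    ‖a‖ ≤ 1 ∧ normSq (a - b) ≤ dDisk z w ^ 2 * normSq (1 - conj b * a) := by
  have hlt := normSq_sub_lt_normSq_one_sub_conj_mul hz hw
  have hD : 0 < normSq (z - w) := normSq_pos.2 (sub_ne_zero.2 hzw)
  have hP : 0 < normSq (1 - conj w * z) := hD.trans hlt
  obtain ⟨v, hv, hsin⟩ := exists_linearIndependent_sinSqAngle_eq (s := dDisk z w ^ 2)
    (by rw [dDisk_sq]; exact div_pos hD hP) (by rw [dDisk_sq, div_le_one₀ hP]; exact hlt.le)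
  obtain ⟨T, hT⟩ := hv.exists_mulVec_eq_smul ![z, w]
  obtain ⟨fT, hfT⟩ := hv.exists_mulVec_eq_smul ![a, b]
  have hTc : ‖T‖ ≤ 1 := by
    refine (norm_le_one_iff_of_mulVec_eq_smul (μ := z) (ν := w) hv (hT 0) (hT 1)).2
      ⟨hz.le, hw.le, ?_⟩
    rw [hsin, dDisk_sq, div_mul_cancel₀ _ hP.ne']
  obtain ⟨ha, -, hab⟩ :=
    (norm_le_one_iff_of_mulVec_eq_smul (μ := a) (ν := b) hv (hfT 0) (hfT 1)).1
      (h T v hTc hv (hT 0) (hT 1) fT (hfT 0) (hfT 1))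
  exact ⟨ha, hsin ▸ hab⟩

lemma norm_le_one_of_norm_sub_le_dDisk_mul {z w a b : ℂ} {T fT : Matrix (Fin 2) (Fin 2) ℂ}
    {v : Fin 2 → Fin 2 → ℂ} (hz : ‖z‖ < 1) (hw : ‖w‖ < 1) (ha : ‖a‖ ≤ 1) (hb : ‖b‖ ≤ 1)
    (hab : ‖a - b‖ ≤ dDisk z w * ‖1 - conj b * a‖) (hv : LinearIndependent ℂ v)
    (hT : ‖T‖ ≤ 1)
    (hT0 : T *ᵥ v 0 = z • v 0) (hT1 : T *ᵥ v 1 = w • v 1)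
    (hf0 : fT *ᵥ v 0 = a • v 0) (hf1 : fT *ᵥ v 1 = b • v 1) : ‖fT‖ ≤ 1 := by
  obtain ⟨-, -, hsin⟩ := (norm_le_one_iff_of_mulVec_eq_smul hv hT0 hT1).1 hT
  refine (norm_le_one_iff_of_mulVec_eq_smul hv hf0 hf1).2 ⟨ha, hb, ?_⟩
  have hP := (normSq_nonneg _).trans_lt (normSq_sub_lt_normSq_one_sub_conj_mul hz hw)
  have hd : dDisk z w ^ 2 ≤ sinSqAngle (v 0) (v 1) := by rwa [dDisk_sq, div_le_iff₀ hP]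
  calc normSq (a - b) ≤ dDisk z w ^ 2 * normSq (1 - conj b * a) :=
        (norm_le_mul_norm_iff_normSq_le (dDisk_nonneg z w)).1 hab
    _ ≤ sinSqAngle (v 0) (v 1) * normSq (1 - conj b * a) :=
        mul_le_mul_of_nonneg_right hd (normSq_nonneg _)

/-- **Remark 3.2(1)**: pseudo-hyperbolic Lipschitz characterization of `‖f‖_{2,gen} ≤ 1` on the
unit disk. -/
theorem memS2gen_disk_iff_lipschitz (f : ℂ → ℂ) :
    (∀ (T : Matrix (Fin 2) (Fin 2) ℂ) (v : Fin 2 → Fin 2 → ℂ) (z w : ℂ),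
        ‖T‖ ≤ 1 → LinearIndependent ℂ v → z ≠ w → ‖z‖ < 1 → ‖w‖ < 1 →
        T *ᵥ v 0 = z • v 0 → T *ᵥ v 1 = w • v 1 →
        ∀ fT : Matrix (Fin 2) (Fin 2) ℂ,
          fT *ᵥ v 0 = f z • v 0 → fT *ᵥ v 1 = f w • v 1 → ‖fT‖ ≤ 1) ↔
      ((∀ z : ℂ, ‖z‖ < 1 → ‖f z‖ ≤ 1) ∧
        ∀ z w : ℂ, ‖z‖ < 1 → ‖w‖ < 1 →
          ‖f z - f w‖ ≤ dDisk z w * ‖1 - (starRingEnd ℂ) (f w) * f z‖) := by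
  constructor
  · intro h
    have two_point (z w : ℂ) (hz : ‖z‖ < 1) (hw : ‖w‖ < 1) (hzw : z ≠ w) :=
      norm_le_one_and_normSq_sub_le_of_forall_contraction hz hw hzw
        fun T v hT hv ↦ h T v z w hT hv hzw hz hw
    have bound (z : ℂ) (hz : ‖z‖ < 1) : ‖f z‖ ≤ 1 := by
      obtain ⟨w, hw, hzw⟩ : ∃ w : ℂ, ‖w‖ < 1 ∧ z ≠ w := by
        by_cases hz0 : z = 0
        · exact ⟨1 / 2, by norm_num, by norm_num [hz0]⟩
        · exact ⟨0, by simp, hz0⟩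
      exact (two_point z w hz hw hzw).1
    refine ⟨bound, fun z w hz hw => ?_⟩
    rw [norm_le_mul_norm_iff_normSq_le (dDisk_nonneg z w)]
    rcases eq_or_ne z w with rfl | hzw
    · rw [sub_self, map_zero]
      exact mul_nonneg (sq_nonneg _) (normSq_nonneg _)
    · exact (two_point z w hz hw hzw).2
  · rintro ⟨hb, hlip⟩ T v z w hT hv - hz hw hT0 hT1 fT hf0 hf1
    exact norm_le_one_of_norm_sub_le_dDisk_mul hz hw (hb z hz) (hb w hw) (hlip z w hz hw) hv hT
      hT0 hT1 hf0 hf1
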